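/- arXiv:1907.07364 — 2 statements merged into one kernel-verified Lean document; each statement's English description precedes it below -/
import Mathlib

section
/- Equivalently stated: for a given vector β with Σ i·β_i = k, the harmonic mean of the products α_1(α_1+α_2)···(α_1+···+α_l) over all compositions α of k with part multiplicities β is equal to (Σ_i β_i)! · ∏_i i^{β_i}. -/
open Finset

/-!
Split each word by its last letter. The last prefix sum of every word is its total weight
`T = ∑ cᵢ wᵢ`, and deleting a final letter `i` leaves a word with counts `c - eᵢ`, so
`F(c) = ∑_α 1 / P(α)` satisfies `F(c) = T⁻¹ ∑_{cᵢ ≠ 0} F(c - eᵢ)`. Since `∑ cᵢ wᵢ = T`, the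
product `∏ 1 / (cᵢ! wᵢ^cᵢ)` satisfies the same recursion, hence equals `F(c)`. Dividing the
multinomial number `n! / ∏ cᵢ!` of words by it gives the harmonic mean `n! ∏ wᵢ^cᵢ`.
-/

theorem card_filter_snoc_eq {ι : Type*} [DecidableEq ι] {n : ℕ} (α : Fin n → ι) (x i : ι) :
    #{j | (Fin.snoc α x : Fin (n + 1) → ι) j = i} = #{j | α j = i} + if x = i then 1 else 0 := by
  rw [card_filter, card_filter, Fin.sum_univ_castSucc]
  simp [Fin.snoc_castSucc, Fin.snoc_last]

theorem sum_filter_le_castSucc {M : Type*} [AddCommMonoid M] {n : ℕ} (f : Fin (n + 1) → M)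
    (j : Fin n) :
    ∑ j' ∈ univ.filter (fun j' => j' ≤ Fin.castSucc j), f j' =
      ∑ j' ∈ univ.filter (fun j' => j' ≤ j), f (Fin.castSucc j') := by
  have hlast : ¬ Fin.last n ≤ Fin.castSucc j := by simp [Fin.le_def]
  rw [sum_filter, sum_filter, Fin.sum_univ_castSucc]
  simp [Fin.castSucc_le_castSucc_iff, hlast]

def prefixSumProd {ι K : Type*} [CommSemiring K] {n : ℕ} (w : ι → K) (α : Fin n → ι) : K :=
  ∏ j, ∑ j' ∈ univ.filter (fun j' => j' ≤ j), w (α j')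

theorem prefixSumProd_snoc {ι K : Type*} [CommSemiring K] {n : ℕ} (w : ι → K) (α : Fin n → ι)
    (x : ι) :
    prefixSumProd w (Fin.snoc α x : Fin (n + 1) → ι) =
      prefixSumProd w α * ∑ j, w ((Fin.snoc α x : Fin (n + 1) → ι) j) := by
  simp only [prefixSumProd]
  rw [Fin.prod_univ_castSucc, filter_true_of_mem fun j _ => Fin.le_last j]
  simp only [sum_filter_le_castSucc, Fin.snoc_castSucc]

section WordsWithCounts

variable {ι : Type*} [Fintype ι] [DecidableEq ι]

@[to_additive]
theorem prod_eq_mul_prod_update_pred {M : Type*} [CommMonoid M] {c : ι → ℕ} {i : ι}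
    (g : ι → ℕ → M) (x : M) (hg : g i (c i) = x * g i (c i - 1)) :
    ∏ j, g j (c j) = x * ∏ j, g j (Function.update c i (c i - 1) j) := by
  rw [Fintype.prod_eq_mul_prod_compl i, hg, Fintype.prod_eq_mul_prod_compl i, mul_assoc,
    Function.update_self]
  congr 2
  exact prod_congr rfl fun j hj => by
    rw [Function.update_of_ne (by simpa using hj)]

def wordsWithCounts (n : ℕ) (c : ι → ℕ) : Finset (Fin n → ι) :=
  univ.filter fun α => ∀ i, #{j | α j = i} = c i

@[simp]
theorem mem_wordsWithCounts {n : ℕ} {c : ι → ℕ} {α : Fin n → ι} :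
    α ∈ wordsWithCounts n c ↔ ∀ i, #{j | α j = i} = c i := by
  simp [wordsWithCounts]

theorem snoc_mem_wordsWithCounts_iff {n : ℕ} {c : ι → ℕ} {α : Fin n → ι} {x : ι} :
    Fin.snoc α x ∈ wordsWithCounts (n + 1) c ↔
      c x ≠ 0 ∧ α ∈ wordsWithCounts n (Function.update c x (c x - 1)) := by
  simp only [mem_wordsWithCounts, card_filter_snoc_eq]
  constructor
  · intro h
    have hx := h x
    rw [if_pos rfl] at hx
    refine ⟨by omega, fun i => ?_⟩
    rcases eq_or_ne i x with rfl | hne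
    · rw [Function.update_self]; omega
    · simpa [Function.update_of_ne hne, Ne.symm hne] using h i
  · rintro ⟨hx, h⟩ i
    rcases eq_or_ne i x with rfl | hne
    · have := h i
      rw [Function.update_self] at this
      rw [if_pos rfl]; omega
    · simpa [Function.update_of_ne hne, Ne.symm hne] using h i

theorem sum_wordsWithCounts_succ {M : Type*} [AddCommMonoid M] {n : ℕ} (c : ι → ℕ)
    (f : (Fin (n + 1) → ι) → M) :
    ∑ α ∈ wordsWithCounts (n + 1) c, f α =
      ∑ i ∈ univ.filter (c · ≠ 0),
        ∑ α ∈ wordsWithCounts n (Function.update c i (c i - 1)), f (Fin.snoc α i) := by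
  rw [sum_sigma']
  refine sum_nbij' (fun α => ⟨α (Fin.last n), Fin.init α⟩) (fun p => Fin.snoc p.2 p.1)
    (fun α hα => ?_) (fun p hp => ?_) (fun α _ => Fin.snoc_init_self α) (fun p _ => ?_)
    (fun α _ => by rw [Fin.snoc_init_self])
  · rw [← Fin.snoc_init_self α, snoc_mem_wordsWithCounts_iff] at hα
    simpa using hα
  · simp only [mem_sigma, mem_filter, mem_univ, true_and] at hp
    exact snoc_mem_wordsWithCounts_iff.mpr hp
  · simp

theorem sum_comp_of_mem_wordsWithCounts {M : Type*} [AddCommMonoid M] {n : ℕ} {c : ι → ℕ}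
    {α : Fin n → ι} (hα : α ∈ wordsWithCounts n c) (w : ι → M) :
    ∑ j, w (α j) = ∑ i, c i • w i := by
  rw [← sum_fiberwise univ α fun j => w (α j)]
  refine sum_congr rfl fun i _ => ?_
  rw [sum_congr rfl fun j hj => by rw [(mem_filter.mp hj).2], sum_const,
    mem_wordsWithCounts.mp hα i]

theorem sum_update_pred {c : ι → ℕ} {i : ι} (hi : c i ≠ 0) :
    ∑ j, Function.update c i (c i - 1) j = ∑ j, c j - 1 := by
  have := sum_eq_add_sum_update_pred (c := c) (i := i) (fun _ m => m) 1 (by omega)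
  omega

theorem card_wordsWithCounts_mul_prod_factorial {n : ℕ} {c : ι → ℕ} (hc : ∑ i, c i = n) :
    #(wordsWithCounts n c) * ∏ i, (c i).factorial = n.factorial := by
  induction n generalizing c with
  | zero =>
    obtain rfl : c = 0 := funext fun i => sum_eq_zero_iff.mp hc i (mem_univ i)
    simp [wordsWithCounts]
  | succ n ih =>
    rw [card_eq_sum_ones, sum_wordsWithCounts_succ, sum_mul]
    calc ∑ i ∈ univ.filter (c · ≠ 0),
          (∑ _ ∈ wordsWithCounts n (Function.update c i (c i - 1)), 1) * ∏ j, (c j).factorial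
        = ∑ i ∈ univ.filter (c · ≠ 0), c i * n.factorial := by
          refine sum_congr rfl fun i hi => ?_
          have hci : c i ≠ 0 := (mem_filter.mp hi).2
          rw [← card_eq_sum_ones, prod_eq_mul_prod_update_pred (fun _ m => m.factorial) (c i)
            (Nat.mul_factorial_pred hci).symm, mul_left_comm,
            ih (by rw [sum_update_pred hci, hc]; rfl)]
      _ = (n + 1).factorial := by
          rw [← sum_mul, sum_filter_ne_zero, hc, Nat.factorial_succ]

theorem prod_factorial_mul_pow_update_pred {K : Type*} [CommSemiring K] {c : ι → ℕ} {i : ι}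
    (hi : c i ≠ 0) (w : ι → K) :
    ∏ j, ((c j).factorial * w j ^ c j : K) =
      c i • w i * ∏ j, ((Function.update c i (c i - 1) j).factorial *
        w j ^ Function.update c i (c i - 1) j : K) := by
  refine prod_eq_mul_prod_update_pred (fun j m => (m.factorial * w j ^ m : K)) _ ?_
  obtain ⟨m, hm⟩ := Nat.exists_eq_succ_of_ne_zero hi
  rw [hm, Nat.succ_sub_one, Nat.factorial_succ, pow_succ, nsmul_eq_mul]
  push_cast
  ring

variable {K : Type*} [Field K] [LinearOrder K] [IsStrictOrderedRing K]

theorem sum_inv_prefixSumProd {n : ℕ} {c : ι → ℕ} {w : ι → K} (hw : ∀ i, c i ≠ 0 → 0 < w i)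
    (hc : ∑ i, c i = n) :
    ∑ α ∈ wordsWithCounts n c, (prefixSumProd w α)⁻¹ =
      (∏ i, ((c i).factorial * w i ^ c i : K))⁻¹ := by
  induction n generalizing c with
  | zero =>
    obtain rfl : c = 0 := funext fun i => sum_eq_zero_iff.mp hc i (mem_univ i)
    simp [wordsWithCounts, prefixSumProd]
  | succ n ih =>
    set T := ∑ i, c i • w i
    have hT : 0 < T := by
      obtain ⟨i, -, hi⟩ := exists_ne_zero_of_sum_ne_zero (by rw [hc]; exact n.succ_ne_zero)
      refine sum_pos' (fun j _ => ?_) ⟨i, mem_univ i, nsmul_pos (hw i hi) hi⟩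
      rcases eq_or_ne (c j) 0 with hj | hj
      · simp [hj]
      · exact (nsmul_pos (hw j hj) hj).le
    have hfiber : ∀ i ∈ univ.filter (c · ≠ 0),
        ∑ α ∈ wordsWithCounts n (Function.update c i (c i - 1)),
          (prefixSumProd w (Fin.snoc α i : Fin (n + 1) → ι))⁻¹ =
          T⁻¹ * (c i • w i * (∏ j, ((c j).factorial * w j ^ c j : K))⁻¹) := by
      intro i hi
      have hci : c i ≠ 0 := (mem_filter.mp hi).2
      have hsnoc : ∀ α ∈ wordsWithCounts n (Function.update c i (c i - 1)),
          prefixSumProd w (Fin.snoc α i : Fin (n + 1) → ι) = prefixSumProd w α * T := fun α hα => by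
        rw [prefixSumProd_snoc,
          sum_comp_of_mem_wordsWithCounts (snoc_mem_wordsWithCounts_iff.mpr ⟨hci, hα⟩)]
      have hpos : c i • w i ≠ 0 := (nsmul_pos (hw i hci) hci).ne'
      have hw' : ∀ j, Function.update c i (c i - 1) j ≠ 0 → 0 < w j := fun j hj => hw j <| by
        rcases eq_or_ne j i with rfl | hji
        · exact hci
        · rwa [Function.update_of_ne hji] at hj
      rw [sum_congr rfl fun α hα => by rw [hsnoc α hα, mul_inv, mul_comm], ← mul_sum,
        ih hw' (by rw [sum_update_pred hci, hc]; rfl),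
        prod_factorial_mul_pow_update_pred hci, mul_inv,
        ← mul_assoc (c i • w i), mul_inv_cancel₀ hpos, one_mul]
    have hT' : ∑ i ∈ univ.filter (c · ≠ 0), c i • w i = T :=
      sum_filter_of_ne fun i _ hi hci => hi (by rw [hci, zero_smul])
    rw [sum_wordsWithCounts_succ, sum_congr rfl hfiber, ← mul_sum, ← sum_mul, hT',
      ← mul_assoc, inv_mul_cancel₀ hT.ne', one_mul]

theorem card_div_sum_inv_prefixSumProd {n : ℕ} {c : ι → ℕ} {w : ι → K}
    (hw : ∀ i, c i ≠ 0 → 0 < w i) (hc : ∑ i, c i = n) :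
    (#(wordsWithCounts n c) : K) / ∑ α ∈ wordsWithCounts n c, (prefixSumProd w α)⁻¹ =
      n.factorial * ∏ i, w i ^ c i := by
  rw [sum_inv_prefixSumProd hw hc, div_inv_eq_mul, prod_mul_distrib, ← mul_assoc]
  congr 1
  exact_mod_cast card_wordsWithCounts_mul_prod_factorial hc

end WordsWithCounts

theorem composition_harmonic_mean_general (a : ℕ) (β : ℕ → ℕ)
    (hβ0 : β 0 = 0)
    (L : ℕ) (hL : L = ∑ i ∈ Finset.range (a + 1), β i)
    (S : Finset (Fin L → Fin (a + 1)))
    (hS : S = (Finset.univ : Finset (Fin L → Fin (a + 1))).filter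
        (fun α => ∀ i : Fin (a + 1),
          (Finset.univ.filter (fun j => α j = i)).card = β i)) :
    (S.card : ℚ) /
      (∑ α ∈ S, (∏ j : Fin L, ∑ j' ∈ Finset.univ.filter (fun j' => j' ≤ j),
          ((α j' : ℕ) : ℚ))⁻¹)
      = (Nat.factorial L : ℚ) * ∏ i ∈ Finset.range (a + 1), (i : ℚ) ^ (β i) := by
  have hS' : S = wordsWithCounts L fun i : Fin (a + 1) => β i := by
    ext α
    simp [hS]
  subst hS' hL
  have hw : ∀ i : Fin (a + 1), β i ≠ 0 → (0 : ℚ) < (i : ℕ) := fun i hi => by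
    have : (i : ℕ) ≠ 0 := fun h => hi (h ▸ hβ0)
    positivity
  rw [← Fin.prod_univ_eq_prod_range (fun i => (i : ℚ) ^ β i)]
  exact card_div_sum_inv_prefixSumProd (w := fun i : Fin (a + 1) => ((i : ℕ) : ℚ)) hw
    (Fin.sum_univ_eq_sum_range β (a + 1))

/-- **Harmonic-mean form.**  For a multiplicity vector `β` with `∑ i * β i = k`,
the harmonic mean of the products `α₁(α₁+α₂)⋯(α₁+⋯+α_l)` over all compositions
`α` of `k` whose part `i` appears exactly `β i` times equals
`(∑ β i)! * ∏ i ^ (β i)`.  Compositions of length `L = ∑ β i` are encoded as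
functions `Fin L → Fin (a+1)`; the harmonic mean of `x₁,…,x_m` is `m / ∑ 1/xⱼ`. -/
theorem composition_harmonic_mean (a k : ℕ) (β : ℕ → ℕ)
    (hβ0 : β 0 = 0) (hsupp : ∀ i, a < i → β i = 0)
    (hk : ∑ i ∈ Finset.range (a + 1), i * β i = k)
    (L : ℕ) (hL : L = ∑ i ∈ Finset.range (a + 1), β i)
    (S : Finset (Fin L → Fin (a + 1)))
    (hS : S = (Finset.univ : Finset (Fin L → Fin (a + 1))).filter
        (fun α => ∀ i : Fin (a + 1),
          (Finset.univ.filter (fun j => α j = i)).card = β i)) :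
    (S.card : ℚ) /
      (∑ α ∈ S, (∏ j : Fin L, ∑ j' ∈ Finset.univ.filter (fun j' => j' ≤ j),
          ((α j' : ℕ) : ℚ))⁻¹)
      = (Nat.factorial L : ℚ) * ∏ i ∈ Finset.range (a + 1), (i : ℚ) ^ (β i) :=
  composition_harmonic_mean_general a β hβ0 L hL S hS
end

section
/- Let r_l(n) denote the number of partitions of n with exactly l different part sizes. Then for n ≥ 1 and l ≥ 1, n·r_l(n) = Σ_{d=1}^n d · Σ_{j=1}^l (-1)^{j+1} Σ_{i=1}^{⌊n/d⌋} C(i,j)·r_{l-j}(n - i·d), with r_0(0) = 1 and r_l(n) = 0 if n = 0, l ≥ 1, or n ≥ 1, l = 0. -/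
/-!
Double counting: `n · r_l(n) = ∑_d d · ∑_p m_d(p)`, where `m_d(p)` is the multiplicity of `d`
in `p`. Deleting all parts equal to `d` from a partition with `m_d(p) = k ≥ 1` leaves a
partition of `n - k d` with one part size fewer, none of them `d`; hence
`∑_p m_d(p) = ∑_k k · q_{l-1}(n - k d)`, where `q_t(m)` counts the partitions of `m` with `t`
part sizes avoiding `d`. The same deletion writes each `r_{l-j}(n - i d)` through the `q`'s, and
after the hockey-stick identity the `j`-th inner sum becomes `A_j + A_{j+1}` with
`A_j = ∑_i C(i, j) q_{l-j}(n - i d)`; the alternating sum over `j` telescopes to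
`A_1 = ∑_i i · q_{l-1}(n - i d)`.
-/

open Finset

/-- `r l n`: the number of partitions of `n` with exactly `l` different part
sizes (multisets of positive integers summing to `n` whose set of distinct
values has cardinality `l`).  In particular `r 0 0 = 1`, `r l 0 = 0` for
`l ≥ 1`, and `r 0 n = 0` for `n ≥ 1`. -/
noncomputable def numPartitionsDistinctSizes (l n : ℕ) : ℕ :=
  Nat.card {s : Multiset ℕ //
    (∀ x ∈ s, 1 ≤ x) ∧ s.sum = n ∧ s.toFinset.card = l}

namespace Multiset

variable {α : Type*} [DecidableEq α]

theorem filter_ne_add_replicate_count (s : Multiset α) (a : α) :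
    s.filter (· ≠ a) + replicate (s.count a) a = s := by
  rw [← filter_eq', add_comm]
  exact filter_add_not _ s

theorem filter_ne_add_replicate_of_notMem {s : Multiset α} {a : α} (h : a ∉ s) (k : ℕ) :
    (s + replicate k a).filter (· ≠ a) = s := by
  rw [filter_add, filter_eq_self.2 fun x hx => ne_of_mem_of_not_mem hx h,
    filter_eq_nil.2 fun x hx => by simp [eq_of_mem_replicate hx], add_zero]

theorem card_toFinset_add_replicate {s : Multiset α} {a : α} (h : a ∉ s) {k : ℕ}
    (hk : k ≠ 0) :
    (s + replicate k a).toFinset.card = s.toFinset.card + 1 := by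
  rw [toFinset_add, toFinset_replicate, if_neg hk, Finset.union_comm, ← Finset.insert_eq,
    card_insert_of_notMem (by simpa using h)]

theorem sum_filter_ne_add_count_mul (s : Multiset ℕ) (a : ℕ) :
    (s.filter (· ≠ a)).sum + s.count a * a = s.sum := by
  conv_rhs => rw [← s.filter_ne_add_replicate_count a]
  rw [sum_add, sum_replicate, smul_eq_mul]

end Multiset

theorem sum_range_choose_eq_choose_succ (m j : ℕ) :
    ∑ i ∈ range m, i.choose j = m.choose (j + 1) := by
  induction m with
  | zero => simp
  | succ m ih => rw [sum_range_succ, ih, Nat.choose_succ_succ', add_comm]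

theorem sum_Ico_one_choose_eq_choose_succ (m : ℕ) {j : ℕ} (hj : j ≠ 0) :
    ∑ i ∈ Ico 1 m, i.choose j = m.choose (j + 1) := by
  rcases Nat.eq_zero_or_pos m with rfl | hm
  · simp
  rw [← sum_range_choose_eq_choose_succ, range_eq_Ico, sum_eq_sum_Ico_succ_bot hm,
    Nat.choose_eq_zero_of_lt (Nat.pos_of_ne_zero hj), zero_add]

theorem sum_Icc_choose_mul_sum_Ioc {R : Type*} [CommSemiring R] (g : ℕ → R) {j : ℕ}
    (hj : j ≠ 0) (N : ℕ) :
    ∑ i ∈ Icc 1 N, (i.choose j : R) * ∑ m ∈ Ioc i N, g m =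
      ∑ m ∈ Icc 1 N, (m.choose (j + 1) : R) * g m := by
  simp_rw [mul_sum]
  rw [sum_comm' (t' := Icc 1 N) (s' := fun m => Ico 1 m)
    (fun i m => by simp only [mem_Icc, mem_Ioc, mem_Ico]; omega)]
  refine sum_congr rfl fun m _ => ?_
  rw [← sum_mul, ← Nat.cast_sum, sum_Ico_one_choose_eq_choose_succ m hj]

theorem sum_Icc_neg_one_pow_mul_add {R : Type*} [CommRing R] (G : ℕ → R) (l : ℕ) :
    ∑ j ∈ Icc 1 l, (-1) ^ (j + 1) * (G j + G (j + 1)) = G 1 - (-1) ^ l * G (l + 1) := by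
  induction l with
  | zero => simp
  | succ l ih =>
    rw [sum_Icc_succ_top (by omega), ih]
    ring

namespace Nat.Partition

def withDistinctSizes (l n : ℕ) : Finset n.Partition :=
  {p | p.parts.toFinset.card = l}

def withDistinctSizesAvoiding (d l n : ℕ) : Finset n.Partition :=
  {p | p.parts.toFinset.card = l ∧ d ∉ p.parts}

theorem card_withDistinctSizes (l n : ℕ) :
    #(withDistinctSizes l n) = numPartitionsDistinctSizes l n := by
  let e : {p : n.Partition // p.parts.toFinset.card = l} ≃
      {s : Multiset ℕ // (∀ x ∈ s, 1 ≤ x) ∧ s.sum = n ∧ s.toFinset.card = l} :=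
    { toFun p := ⟨p.1.parts, fun _ hx => p.1.parts_pos hx, p.1.parts_sum, p.2⟩
      invFun s := ⟨⟨s.1, fun hx => s.2.1 _ hx, s.2.2.1⟩, s.2.2.2⟩
      left_inv _ := rfl
      right_inv _ := rfl }
  rw [numPartitionsDistinctSizes, ← Nat.card_congr e, Nat.card_eq_fintype_card,
    Fintype.card_subtype, withDistinctSizes]

theorem count_mul_le {n : ℕ} (p : n.Partition) (d : ℕ) : p.parts.count d * d ≤ n := by
  have := p.parts.sum_filter_ne_add_count_mul d
  rw [p.parts_sum] at this
  omega

theorem sum_Icc_mul_count {n : ℕ} (p : n.Partition) :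
    ∑ d ∈ Icc 1 n, d * p.parts.count d = n := by
  have hsub : p.parts.toFinset ⊆ Icc 1 n := fun x hx => by
    rw [Multiset.mem_toFinset] at hx
    exact mem_Icc.2 ⟨p.parts_pos hx, p.le_of_mem_parts hx⟩
  simp_rw [mul_comm _ (p.parts.count _), ← smul_eq_mul,
    ← sum_multiset_count_of_subset _ _ hsub, p.parts_sum]

theorem mul_card_eq_sum_sum_count {n : ℕ} (s : Finset n.Partition) :
    n * #s = ∑ d ∈ Icc 1 n, d * ∑ p ∈ s, p.parts.count d := by
  simp_rw [mul_sum, sum_comm (s := Icc 1 n), sum_Icc_mul_count, sum_const, smul_eq_mul,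
    mul_comm]

theorem card_filter_count_eq {m d k t : ℕ} (hd : 1 ≤ d) (hk : k ≠ 0) (hkd : k * d ≤ m) :
    #{p ∈ withDistinctSizes (t + 1) m | p.parts.count d = k} =
      #(withDistinctSizesAvoiding d t (m - k * d)) := by
  simp only [withDistinctSizes, withDistinctSizesAvoiding, filter_filter]
  refine card_bij'
    (fun p hp => ⟨p.parts.filter (· ≠ d),
      fun hi => p.parts_pos (Multiset.mem_of_mem_filter hi), by
        have := p.parts.sum_filter_ne_add_count_mul d
        simp only [mem_filter, mem_univ, true_and] at hp
        rw [p.parts_sum, hp.2] at this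
        omega⟩)
    (fun q _ => ⟨q.parts + .replicate k d, fun hi => by
        rcases Multiset.mem_add.1 hi with hi | hi
        · exact q.parts_pos hi
        · rw [Multiset.eq_of_mem_replicate hi]; exact hd,
      by rw [Multiset.sum_add, q.parts_sum, Multiset.sum_replicate, smul_eq_mul]; omega⟩)
    ?_ ?_ ?_ ?_
  · intro p hp
    simp only [mem_filter, mem_univ, true_and] at hp ⊢
    have hdecomp := p.parts.filter_ne_add_replicate_count d
    rw [hp.2] at hdecomp
    refine ⟨?_, fun h => Multiset.of_mem_filter h rfl⟩
    have := Multiset.card_toFinset_add_replicate (s := p.parts.filter (· ≠ d))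
      (fun h => Multiset.of_mem_filter h rfl) hk
    rw [hdecomp, hp.1] at this
    omega
  · intro q hq
    simp only [mem_filter, mem_univ, true_and] at hq ⊢
    rw [Multiset.card_toFinset_add_replicate hq.2 hk, hq.1, Multiset.count_add,
      Multiset.count_replicate_self, Multiset.count_eq_zero_of_notMem hq.2, zero_add]
    exact ⟨rfl, rfl⟩
  · intro p hp
    simp only [mem_filter, mem_univ, true_and] at hp
    ext1
    conv_rhs => rw [← p.parts.filter_ne_add_replicate_count d, hp.2]
  · intro q hq
    simp only [mem_filter, mem_univ, true_and] at hq
    exact Nat.Partition.ext (Multiset.filter_ne_add_replicate_of_notMem hq.2 k)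

theorem sum_withDistinctSizes_count {M : Type*} [AddCommMonoid M] (f : ℕ → M) {m d t : ℕ}
    (hd : 1 ≤ d) :
    ∑ p ∈ withDistinctSizes (t + 1) m, f (p.parts.count d) =
      #(withDistinctSizesAvoiding d (t + 1) m) • f 0 +
        ∑ k ∈ Icc 1 (m / d), #(withDistinctSizesAvoiding d t (m - k * d)) • f k := by
  have hmaps : ∀ p ∈ withDistinctSizes (t + 1) m, p.parts.count d ∈ Icc 0 (m / d) :=
    fun p _ => mem_Icc.2 ⟨zero_le _, (Nat.le_div_iff_mul_le hd).2 (p.count_mul_le d)⟩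
  rw [← sum_fiberwise_of_maps_to' hmaps, ← insert_Icc_add_one_left_eq_Icc (zero_le _),
    sum_insert (by simp)]
  simp only [sum_const]
  congr 1
  · congr 2
    ext p
    simp [withDistinctSizes, withDistinctSizesAvoiding, Multiset.count_eq_zero]
  · refine sum_congr rfl fun k hk => ?_
    rw [mem_Icc, Nat.le_div_iff_mul_le hd] at hk
    rw [card_filter_count_eq hd (by omega) hk.2]

theorem card_withDistinctSizes_succ_sub_mul {n d i t : ℕ} (hd : 1 ≤ d) (hi : i * d ≤ n) :
    #(withDistinctSizes (t + 1) (n - i * d)) =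
      #(withDistinctSizesAvoiding d (t + 1) (n - i * d)) +
        ∑ m ∈ Ioc i (n / d), #(withDistinctSizesAvoiding d t (n - m * d)) := by
  have hiN : i ≤ n / d := (Nat.le_div_iff_mul_le hd).2 hi
  have hIoc : Ioc i (n / d) = (Icc 1 (n / d - i)).map (addLeftEmbedding i) := by
    rw [map_add_left_Icc, ← Icc_add_one_left_eq_Ioc, Nat.add_sub_cancel' hiN, add_comm]
  rw [card_eq_sum_ones, sum_withDistinctSizes_count (fun _ => 1) hd, hIoc, sum_map,
    mul_comm i d, Nat.sub_mul_div]
  simp only [smul_eq_mul, mul_one]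
  refine congrArg _ (sum_congr rfl fun k _ => ?_)
  rw [Nat.sub_sub, mul_comm d i, ← add_mul]
  rfl

theorem sum_withDistinctSizes_count_eq {m d t : ℕ} (hd : 1 ≤ d) :
    ∑ p ∈ withDistinctSizes (t + 1) m, p.parts.count d =
      ∑ k ∈ Icc 1 (m / d), k * #(withDistinctSizesAvoiding d t (m - k * d)) := by
  simpa [mul_comm] using sum_withDistinctSizes_count id (m := m) (t := t) hd

theorem withDistinctSizes_zero (d m : ℕ) :
    withDistinctSizes 0 m = withDistinctSizesAvoiding d 0 m := by
  ext p
  simp +contextual [withDistinctSizes, withDistinctSizesAvoiding, ← Multiset.mem_toFinset]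

theorem alternating_sum_choose_mul_card_withDistinctSizes {n d l : ℕ} (hd : 1 ≤ d)
    (hl : 1 ≤ l) :
    ∑ j ∈ Icc 1 l, (-1 : ℤ) ^ (j + 1) *
        ∑ i ∈ Icc 1 (n / d), (i.choose j : ℤ) * #(withDistinctSizes (l - j) (n - i * d)) =
      ∑ i ∈ Icc 1 (n / d), (i : ℤ) * #(withDistinctSizesAvoiding d (l - 1) (n - i * d)) := by
  set N := n / d
  let q (u i : ℕ) : ℤ := #(withDistinctSizesAvoiding d u (n - i * d))
  -- cut off so that `A (l + 1) = 0`; the bare sum would not vanish, as `l - (l + 1) = 0`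
  let A (j : ℕ) : ℤ :=
    if j ≤ l then ∑ i ∈ Icc 1 N, (i.choose j : ℤ) * q (l - j) i else 0
  have hA : ∀ j ∈ Icc 1 l,
      ∑ i ∈ Icc 1 N, (i.choose j : ℤ) * #(withDistinctSizes (l - j) (n - i * d)) =
        A j + A (j + 1) := by
    intro j hj
    rw [mem_Icc] at hj
    rcases hj.2.lt_or_eq with hjl | rfl
    · obtain ⟨u, hu⟩ : ∃ u, l - j = u + 1 := ⟨l - j - 1, by omega⟩
      have hshift : ∀ i ∈ Icc 1 N, (#(withDistinctSizes (u + 1) (n - i * d)) : ℤ) =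
          q (u + 1) i + ∑ m ∈ Ioc i N, q u m := fun i hi => by
        rw [card_withDistinctSizes_succ_sub_mul hd
          ((Nat.le_div_iff_mul_le hd).1 (mem_Icc.1 hi).2)]
        push_cast
        rfl
      simp only [A, if_pos hj.2, if_pos (show j + 1 ≤ l from hjl), hu,
        show l - (j + 1) = u by omega]
      rw [sum_congr rfl fun i hi => by rw [hshift i hi, mul_add], sum_add_distrib,
        sum_Icc_choose_mul_sum_Ioc _ (by omega)]
    · simp only [A, q, if_pos le_rfl, if_neg (Nat.not_succ_le_self j), add_zero, Nat.sub_self,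
        withDistinctSizes_zero d]
  rw [sum_congr rfl fun j hj => by rw [hA j hj], sum_Icc_neg_one_pow_mul_add]
  simp only [A, q, if_pos hl, if_neg (Nat.not_succ_le_self l), mul_zero, sub_zero,
    Nat.choose_one_right]

end Nat.Partition

theorem numPartitionsDistinctSizes_recursion_general (n l : ℕ) (hl : 1 ≤ l) :
    (n : ℤ) * numPartitionsDistinctSizes l n =
      ∑ d ∈ Finset.Icc 1 n, (d : ℤ) *
        ∑ j ∈ Finset.Icc 1 l, (-1 : ℤ) ^ (j + 1) *
          ∑ i ∈ Finset.Icc 1 (n / d),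
            (i.choose j : ℤ) * numPartitionsDistinctSizes (l - j) (n - i * d) := by
  open Nat.Partition in
  simp only [← card_withDistinctSizes]
  obtain ⟨t, rfl⟩ : ∃ t, l = t + 1 := ⟨l - 1, by omega⟩
  have hcount : ∀ d ∈ Icc 1 n, ∑ p ∈ withDistinctSizes (t + 1) n, (p.parts.count d : ℤ) =
      ∑ i ∈ Icc 1 (n / d), (i : ℤ) * #(withDistinctSizesAvoiding d t (n - i * d)) :=
    fun d hd => by exact_mod_cast sum_withDistinctSizes_count_eq (mem_Icc.1 hd).1
  calc (n : ℤ) * #(withDistinctSizes (t + 1) n)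
      = ∑ d ∈ Icc 1 n, (d : ℤ) *
          ∑ p ∈ withDistinctSizes (t + 1) n, (p.parts.count d : ℤ) := by
        exact_mod_cast mul_card_eq_sum_sum_count _
    _ = _ := sum_congr rfl fun d hd => by
        rw [hcount d hd, alternating_sum_choose_mul_card_withDistinctSizes (mem_Icc.1 hd).1 hl,
          Nat.add_sub_cancel]

/-- **Recursion for `r_l(n)`:** for `n ≥ 1` and `l ≥ 1`,
`n·r_l(n) = ∑_{d=1}^n d ∑_{j=1}^l (-1)^{j+1} ∑_{i=1}^{⌊n/d⌋} C(i,j)·r_{l-j}(n-i·d)`. -/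
theorem numPartitionsDistinctSizes_recursion (n l : ℕ) (hn : 1 ≤ n) (hl : 1 ≤ l) :
    (n : ℤ) * numPartitionsDistinctSizes l n =
      ∑ d ∈ Finset.Icc 1 n, (d : ℤ) *
        ∑ j ∈ Finset.Icc 1 l, (-1 : ℤ) ^ (j + 1) *
          ∑ i ∈ Finset.Icc 1 (n / d),
            (i.choose j : ℤ) * numPartitionsDistinctSizes (l - j) (n - i * d) :=
  numPartitionsDistinctSizes_recursion_general n l hl
end
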